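/- The ∘-translation of the T axiom is a propositional tautology: (∘φ ∧ φ) → φ is valid on all frames, hence the translated logic T∘ coincides with K∘ (the minimal RI-logic). -/
import Mathlib


/-- Formulas of the language L∘. -/
inductive RIForm : Type where
  | var : Nat → RIForm
  | neg : RIForm → RIForm
  | and : RIForm → RIForm → RIForm
  | circ : RIForm → RIForm
deriving DecidableEq

def RIForm.imp (φ ψ : RIForm) : RIForm := .neg (.and φ (.neg ψ))
def RIForm.or (φ ψ : RIForm) : RIForm := .neg (.and (.neg φ) (.neg ψ))
def RIForm.top : RIForm := .neg (.and (.var 0) (.neg (.var 0)))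
def RIForm.bot : RIForm := .and (.var 0) (.neg (.var 0))
def RIForm.iff (φ ψ : RIForm) : RIForm := .and (φ.imp ψ) (ψ.imp φ)

/-- Reflexive-insensitive satisfaction. -/
def riSat {W : Type} (R : W → W → Prop) (V : Nat → W → Prop) : W → RIForm → Prop
  | w, .var p => V p w
  | w, .neg φ => ¬ riSat R V w φ
  | w, .and φ ψ => riSat R V w φ ∧ riSat R V w ψ
  | w, .circ φ => ¬ riSat R V w φ ∨ ∀ x, R w x → riSat R V x φ

/-- Validity on a frame under the reflexive-insensitive semantics. -/
def riValid {W : Type} (R : W → W → Prop) (φ : RIForm) : Prop :=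
  ∀ V w, riSat R V w φ

/-- Boolean evaluation treating variables and ∘-formulas as atoms. -/
def propEval (v : RIForm → Prop) : RIForm → Prop
  | .var p => v (.var p)
  | .neg φ => ¬ propEval v φ
  | .and φ ψ => propEval v φ ∧ propEval v ψ
  | .circ φ => v (.circ φ)

/-- Substitution instances of propositional tautologies. -/
def RITaut (φ : RIForm) : Prop := ∀ v, propEval v φ

/-- Uniform substitution. -/
def RIForm.subst (σ : Nat → RIForm) : RIForm → RIForm
  | .var p => σ p
  | .neg φ => .neg (φ.subst σ)
  | .and φ ψ => .and (φ.subst σ) (ψ.subst σ)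
  | .circ φ => .circ (φ.subst σ)

/-- The minimal RI-logic B_K. -/
inductive BK : RIForm → Prop
  | taut {φ} : RITaut φ → BK φ
  | b0 : BK (.circ RIForm.top)
  | b1 (φ : RIForm) : BK ((RIForm.neg (.circ φ)).imp φ)
  | b2 (φ ψ : RIForm) : BK ((RIForm.and (.circ φ) (.circ ψ)).imp (.circ (.and φ ψ)))
  | mp {φ ψ} : BK (φ.imp ψ) → BK φ → BK ψ
  | us {φ} (σ : Nat → RIForm) : BK φ → BK (φ.subst σ)
  | bN {φ ψ} : BK (φ.imp ψ) →
      BK ((RIForm.and (.circ φ) φ).imp (RIForm.and (.circ ψ) ψ))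

/-- Formulas of the basic modal language with □. -/
inductive MForm : Type where
  | var : Nat → MForm
  | neg : MForm → MForm
  | and : MForm → MForm → MForm
  | box : MForm → MForm
deriving DecidableEq

def MForm.imp (φ ψ : MForm) : MForm := .neg (.and φ (.neg ψ))
def MForm.diam (φ : MForm) : MForm := .neg (.box (.neg φ))

/-- Standard Kripke satisfaction. -/
def msat {W : Type} (R : W → W → Prop) (V : Nat → W → Prop) : W → MForm → Prop
  | w, .var p => V p w
  | w, .neg φ => ¬ msat R V w φ
  | w, .and φ ψ => msat R V w φ ∧ msat R V w ψ
  | w, .box φ => ∀ x, R w x → msat R V x φ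

/-- The ∘-translation: (□φ)∘ = ∘(φ∘) ∧ φ∘. -/
def MForm.trans : MForm → RIForm
  | .var p => .var p
  | .neg φ => .neg φ.trans
  | .and φ ψ => .and φ.trans ψ.trans
  | .box φ => .and (.circ φ.trans) φ.trans

/-- Boolean evaluation for modal formulas treating □-formulas as atoms. -/
def mpropEval (v : MForm → Prop) : MForm → Prop
  | .var p => v (.var p)
  | .neg φ => ¬ mpropEval v φ
  | .and φ ψ => mpropEval v φ ∧ mpropEval v ψ
  | .box φ => v (.box φ)

def MTaut (φ : MForm) : Prop := ∀ v, mpropEval v φ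

/-- The normal modal logic axiomatized by K plus the axioms in Ax. -/
inductive NProof (Ax : Set MForm) : MForm → Prop
  | taut {φ} : MTaut φ → NProof Ax φ
  | axK (φ ψ : MForm) :
      NProof Ax ((MForm.box (φ.imp ψ)).imp ((MForm.box φ).imp (MForm.box ψ)))
  | ax {φ} : φ ∈ Ax → NProof Ax φ
  | mp {φ ψ} : NProof Ax (φ.imp ψ) → NProof Ax φ → NProof Ax ψ
  | nec {φ} : NProof Ax φ → NProof Ax (MForm.box φ)

/-- The logic K. -/
def KProof : MForm → Prop := NProof ∅

/-- The logic T = K + (□φ → φ). -/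
def TProof : MForm → Prop := NProof {χ | ∃ φ : MForm, χ = (MForm.box φ).imp φ}

/-- The smallest RI-logic containing the set S. -/
inductive RIext (S : Set RIForm) : RIForm → Prop
  | base {φ} : φ ∈ S → RIext S φ
  | taut {φ} : RITaut φ → RIext S φ
  | b0 : RIext S (.circ RIForm.top)
  | b1 (φ : RIForm) : RIext S ((RIForm.neg (.circ φ)).imp φ)
  | b2 (φ ψ : RIForm) : RIext S ((RIForm.and (.circ φ) (.circ ψ)).imp (.circ (.and φ ψ)))
  | mp {φ ψ} : RIext S (φ.imp ψ) → RIext S φ → RIext S ψ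
  | us {φ} (σ : Nat → RIForm) : RIext S φ → RIext S (φ.subst σ)
  | bN {φ ψ} : RIext S (φ.imp ψ) →
      RIext S ((RIForm.and (.circ φ) φ).imp (RIForm.and (.circ ψ) ψ))

lemma RIext.necCirc {S : Set RIForm} {φ : RIForm} (h : RIext S φ) :
    RIext S (.and (.circ φ) φ) := by
  have h1 : RIext S (RIForm.top.imp φ) := by
    refine RIext.mp (RIext.taut ?_) h
    intro v; simp [propEval, RIForm.imp, RIForm.top]
  have h2 := RIext.bN (S := S) h1
  have ht : RIext S RIForm.top :=
    RIext.taut (by intro v; simp [propEval, RIForm.top])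
  have hi : RIext S ((RIForm.circ RIForm.top).imp
      (RIForm.top.imp (.and (.circ RIForm.top) RIForm.top))) :=
    RIext.taut (by intro v; simp [propEval, RIForm.imp, RIForm.top])
  have h3 : RIext S (.and (.circ RIForm.top) RIForm.top) :=
    RIext.mp (RIext.mp hi RIext.b0) ht
  exact RIext.mp h2 h3

lemma trans_imp (φ ψ : MForm) :
    (φ.imp ψ).trans = RIForm.imp φ.trans ψ.trans := rfl

lemma nproof_mono {Ax Ax' : Set MForm} (hs : Ax ⊆ Ax') {φ : MForm}
    (h : NProof Ax φ) : NProof Ax' φ := by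
  induction h with
  | taut h => exact NProof.taut h
  | axK φ ψ => exact NProof.axK φ ψ
  | ax h => exact NProof.ax (hs h)
  | mp _ _ ih1 ih2 => exact NProof.mp ih1 ih2
  | nec _ ih => exact NProof.nec ih

lemma tproof_trans {γ : MForm} (h : TProof γ) :
    RIext {β | ∃ γ, KProof γ ∧ β = γ.trans} γ.trans := by
  induction h with
  | taut h => exact RIext.base ⟨_, NProof.taut h, rfl⟩
  | axK φ ψ => exact RIext.base ⟨_, NProof.axK φ ψ, rfl⟩
  | ax h =>
    obtain ⟨φ, rfl⟩ := h
    refine RIext.taut ?_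
    intro v; simp [MForm.trans, propEval, RIForm.imp, MForm.imp]
  | mp _ _ ih1 ih2 =>
    rw [trans_imp] at ih1
    exact RIext.mp ih1 ih2
  | nec _ ih => exact RIext.necCirc ih

theorem T_translation_trivial :
    (∀ (φ : RIForm) (W : Type) (R : W → W → Prop),
        riValid R ((RIForm.and (.circ φ) φ).imp φ)) ∧
    (∀ α : RIForm,
        RIext {β | ∃ γ, TProof γ ∧ β = γ.trans} α ↔
        RIext {β | ∃ γ, KProof γ ∧ β = γ.trans} α) := by
  constructor
  · intro φ W R V w
    simp [riSat, RIForm.imp]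
  · intro α
    constructor
    · intro h
      induction h with
      | base h => obtain ⟨γ, hγ, rfl⟩ := h; exact tproof_trans hγ
      | taut h => exact RIext.taut h
      | b0 => exact RIext.b0
      | b1 φ => exact RIext.b1 φ
      | b2 φ ψ => exact RIext.b2 φ ψ
      | mp _ _ ih1 ih2 => exact RIext.mp ih1 ih2
      | us σ _ ih => exact RIext.us σ ih
      | bN _ ih => exact RIext.bN ih
    · intro h
      induction h with
      | base h =>
        obtain ⟨γ, hγ, rfl⟩ := h
        exact RIext.base ⟨γ, nproof_mono (Set.empty_subset _) hγ, rfl⟩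
      | taut h => exact RIext.taut h
      | b0 => exact RIext.b0
      | b1 φ => exact RIext.b1 φ
      | b2 φ ψ => exact RIext.b2 φ ψ
      | mp _ _ ih1 ih2 => exact RIext.mp ih1 ih2
      | us σ _ ih => exact RIext.us σ ih
      | bN _ ih => exact RIext.bN ih
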